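/- For matroids M(S) and N(T) on disjoint finite sets S and T, the set of matroids L on S ∪ T satisfying L|S = M and L/S = N is exactly the interval [M ⊕ N, M □ N] in the rank-preserving weak order on matroids on S ∪ T. -/

import Mathlib

open Matroid

variable {α : Type*}

/-- The contraction `M / C` of a matroid by a set, defined as the dual of the
deletion (restriction to the complement) of the dual. Its ground set is `M.E \ C`. -/
def Matroid.con (M : Matroid α) (C : Set α) : Matroid α := (M✶ ↾ (M.E \ C))✶

/-- The rank `ρ(M)` of a matroid (as a value in `ℕ∞`): the common cardinality of its bases. -/
noncomputable def Matroid.erank (M : Matroid α) : ℕ∞ := ⨆ B ∈ {B | M.IsBase B}, B.encard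

/-- The rank function `ρ_M(X)` of a matroid: the rank of the restriction to `X`. -/
noncomputable def Matroid.rnk (M : Matroid α) (X : Set α) : ℕ∞ := (M ↾ X).erank

/-- `IsFreeProduct M N P` says that `P` is the free product `M □ N`: its ground set is
`M.E ∪ N.E`, and its bases are exactly the sets `B ⊆ M.E ∪ N.E` of cardinality
`ρ(M) + ρ(N)` such that `B ∩ M.E` is independent in `M` and `B ∩ N.E` spans `N`. -/
def IsFreeProduct (M N P : Matroid α) : Prop :=
  P.E = M.E ∪ N.E ∧ ∀ B : Set α,
    (P.IsBase B ↔ B ⊆ M.E ∪ N.E ∧ B.encard = M.erank + N.erank ∧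
      M.Indep (B ∩ M.E) ∧ N.Spanning (B ∩ N.E))

/-- The rank-preserving weak order on matroids: `M ≤ N` iff `M` and `N` have the same
ground set and every base of `M` is a base of `N`. -/
def weakLE (M N : Matroid α) : Prop := M.E = N.E ∧ ∀ B, M.IsBase B → N.IsBase B

/-! The lower bound `M ⊕ N ≤ L` says that `I ∪ J` is a base of `L` for all bases `I` of `M` and
`J` of `N`; the upper bound `L ≤ M □ N` says that every base `B` of `L` has `B ∩ S` independent in
`M`, `B ∩ T` spanning in `N` and the right size. If `L ↾ S = M` and `L ／ S = N`, both hold: a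
basis of `S` together with a base of `L ／ S` is a base of `L`, and a base of `L` minus `S` spans
`L ／ S`. Conversely, the two bounds make the independent sets of `L ↾ S` those of `M`; and they
make every base of `N` a base of `L ／ S` and every base of `L ／ S` spanning in `N`, which forces
`L ／ S = N` since bases form an antichain. -/

open Set

namespace Matroid

variable {L M N : Matroid α} {S I J B : Set α}

lemma con_eq_contract (M : Matroid α) (C : Set α) : M.con C = M ／ C := rfl

lemma erank_eq_eRank (M : Matroid α) : M.erank = M.eRank := by
  rw [erank, eRank, iSup_subtype']
  rfl

lemma IsBasis.contract_isBase_iff (hI : L.IsBasis I S) :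
    (L ／ S).IsBase B ↔ L.IsBase (B ∪ I) ∧ Disjoint B S := by
  refine ⟨fun hB ↦ ?_, fun ⟨hBI, hBS⟩ ↦ ?_⟩
  · obtain ⟨hBI, -⟩ := hI.contract_indep_iff.1 hB.indep
    obtain ⟨hBS, hdisj⟩ := (contract_spanning_iff hI.subset_ground).1 hB.spanning
    refine ⟨isBase_iff_indep_closure_eq.2 ⟨hBI, ?_⟩, hdisj⟩
    rw [closure_union_congr_right hI.closure_eq_closure, hBS.closure_eq]
  · refine (hI.contract_indep_iff.2 ⟨hBI.indep, hBS.symm⟩).isBase_of_spanning ?_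
    refine (contract_spanning_iff hI.subset_ground).2 ⟨hBI.spanning.superset ?_ ?_, hBS⟩
    · exact union_subset_union_right B hI.subset
    · exact union_subset (subset_union_left.trans hBI.subset_ground) hI.subset_ground

lemma eq_of_forall_isBase_spanning {P Q : Matroid α} (hE : P.E = Q.E)
    (hQP : ∀ B, Q.IsBase B → P.IsBase B) (hPQ : ∀ B, P.IsBase B → Q.Spanning B) : P = Q := by
  refine ext_isBase hE fun B _ ↦ ⟨fun hB ↦ ?_, hQP B⟩
  obtain ⟨B', hB', hB'B⟩ := (hPQ B hB).exists_isBase_subset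
  rwa [← (hQP B' hB').eq_of_subset_isBase hB hB'B]

lemma isBase_union_of_isBase_restrict_of_isBase_contract (hS : S ⊆ L.E)
    (hI : (L ↾ S).IsBase I) (hJ : (L ／ S).IsBase J) : L.IsBase (I ∪ J) := by
  rw [union_comm]
  exact (((isBase_restrict_iff hS).1 hI).contract_isBase_iff.1 hJ).1

lemma IsBase.encard_eq_erank_restrict_add_erank_contract (hB : L.IsBase B)
    (hS : S ⊆ L.E) : B.encard = (L ↾ S).erank + (L ／ S).erank := by
  obtain ⟨I, hI⟩ := (L ↾ S).exists_isBase
  obtain ⟨J, hJ⟩ := (L ／ S).exists_isBase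
  have hIJ : Disjoint I J := disjoint_sdiff_right.mono hI.subset_ground hJ.subset_ground
  rw [erank_eq_eRank, erank_eq_eRank, ← hI.encard_eq_eRank, ← hJ.encard_eq_eRank,
    ← encard_union_eq hIJ,
    hB.encard_eq_encard_of_isBase (isBase_union_of_isBase_restrict_of_isBase_contract hS hI hJ)]

lemma IsBase.spanning_contract_inter_ground (hB : L.IsBase B) (S : Set α) :
    (L ／ S).Spanning (B ∩ (L ／ S).E) := by
  rw [contract_ground, ← inter_sdiff_assoc, inter_eq_left.2 hB.subset_ground]
  exact hB.spanning.contract S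

lemma restrict_eq_of_forall_indep_of_forall_isBase
    (hML : ∀ I, M.Indep I → L.Indep I) (hLM : ∀ B, L.IsBase B → M.Indep (B ∩ M.E)) :
    L ↾ M.E = M := by
  refine ext_indep rfl fun I (hI : I ⊆ M.E) ↦ ?_
  rw [restrict_indep_iff, and_iff_left hI]
  refine ⟨fun hLI ↦ ?_, hML I⟩
  obtain ⟨B, hB, hIB⟩ := hLI.exists_isBase_superset
  exact (hLM B hB).subset (subset_inter hIB hI)

lemma contract_eq_of_forall_isBase (hS : S ⊆ L.E) (hres : L ↾ S = M)
    (hNE : N.E = L.E \ S) (hunion : ∀ I J, M.IsBase I → N.IsBase J → L.IsBase (I ∪ J))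
    (hspan : ∀ B, L.IsBase B → N.Spanning (B ∩ N.E)) : L ／ S = N := by
  refine eq_of_forall_isBase_spanning (by rw [contract_ground, hNE]) (fun J hJ ↦ ?_) fun B hB ↦ ?_
  · obtain ⟨I, hI⟩ := M.exists_isBase
    have hIS : L.IsBasis I S := (isBase_restrict_iff hS).1 (hres ▸ hI)
    refine hIS.contract_isBase_iff.2 ⟨union_comm I J ▸ hunion I J hI hJ, ?_⟩
    exact disjoint_sdiff_left.mono_left (hNE ▸ hJ.subset_ground)
  · obtain ⟨hBS, -⟩ := (contract_spanning_iff hS).1 hB.spanning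
    obtain ⟨W, hW, hWBS⟩ := hBS.exists_isBase_subset
    have hWB : W ∩ N.E ⊆ B := fun x ⟨hxW, hxN⟩ ↦
      (hWBS hxW).resolve_right (hNE ▸ hxN).2
    exact (hspan W hW).superset hWB (hNE ▸ hB.subset_ground)

end Matroid

section

variable {L M N : Matroid α}

lemma disjointSum_weakLE_iff (h : Disjoint M.E N.E) :
    weakLE (M.disjointSum N h) L ↔
      L.E = M.E ∪ N.E ∧ ∀ I J, M.IsBase I → N.IsBase J → L.IsBase (I ∪ J) := by
  rw [weakLE, disjointSum_ground_eq, eq_comm]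
  refine and_congr_right fun _ ↦ ⟨fun hL I J hI hJ ↦ hL _ ?_, fun hL B hB ↦ ?_⟩
  · have hIM : (I ∪ J) ∩ M.E = I := by
      rw [union_inter_distrib_right, inter_eq_left.2 hI.subset_ground,
        (h.symm.mono_left hJ.subset_ground).inter_eq, union_empty]
    have hJN : (I ∪ J) ∩ N.E = J := by
      rw [union_inter_distrib_right, inter_eq_left.2 hJ.subset_ground,
        (h.mono_left hI.subset_ground).inter_eq, empty_union]
    rw [disjointSum_isBase_iff, hIM, hJN]
    exact ⟨hI, hJ, union_subset_union hI.subset_ground hJ.subset_ground⟩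
  · obtain ⟨I, J, hI, hJ, -, rfl⟩ := hB.eq_union_image_of_disjointSum
    exact hL I J hI hJ

lemma IsFreeProduct.weakLE_iff {F : Matroid α} (hF : IsFreeProduct M N F) :
    weakLE L F ↔ L.E = M.E ∪ N.E ∧ ∀ B, L.IsBase B →
      B.encard = M.erank + N.erank ∧ M.Indep (B ∩ M.E) ∧ N.Spanning (B ∩ N.E) := by
  rw [weakLE, hF.1]
  refine and_congr_right fun hE ↦ forall_congr' fun B ↦ imp_congr_right fun hB ↦ ?_
  rw [hF.2 B, and_iff_right (hE ▸ hB.subset_ground)]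

end

theorem minor_pair_eq_interval_general
    (M N : Matroid α) (h : Disjoint M.E N.E)
    (F : Matroid α) (hF : IsFreeProduct M N F)
    (L : Matroid α) (hLE : L.E = M.E ∪ N.E) :
    (L ↾ M.E = M ∧ L.con M.E = N) ↔ (weakLE (M.disjointSum N h) L ∧ weakLE L F) := by
  rw [disjointSum_weakLE_iff, hF.weakLE_iff, con_eq_contract, and_iff_right hLE,
    and_iff_right hLE]
  have hS : M.E ⊆ L.E := hLE ▸ subset_union_left
  have hNE : N.E = L.E \ M.E := by rw [hLE, union_sdiff_left, h.symm.sdiff_eq_left]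
  constructor
  · rintro ⟨hres, hcon⟩
    refine ⟨fun I J hI hJ ↦ ?_, fun B hB ↦ ⟨?_, ?_, ?_⟩⟩
    · rw [← hres] at hI
      rw [← hcon] at hJ
      exact isBase_union_of_isBase_restrict_of_isBase_contract hS hI hJ
    · rw [hB.encard_eq_erank_restrict_add_erank_contract hS, hres, hcon]
    · rw [← hres]
      exact restrict_indep_iff.2 ⟨hB.indep.subset inter_subset_left, inter_subset_right⟩
    · rw [← hcon]
      exact hB.spanning_contract_inter_ground M.E
  · rintro ⟨hunion, hfree⟩
    have hres : L ↾ M.E = M := by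
      refine restrict_eq_of_forall_indep_of_forall_isBase (fun I hI ↦ ?_)
        fun B hB ↦ (hfree B hB).2.1
      obtain ⟨I', hI', hII'⟩ := hI.exists_isBase_superset
      obtain ⟨J, hJ⟩ := N.exists_isBase
      exact (hunion I' J hI' hJ).indep.subset (hII'.trans subset_union_left)
    exact ⟨hres, contract_eq_of_forall_isBase hS hres hNE hunion fun B hB ↦ (hfree B hB).2.2⟩

/-- for matroids `M(S)`, `N(T)` on disjoint finite sets, the matroids `L` on
`S ∪ T` with `L|S = M` and `L/S = N` are exactly those in the weak-order interval
`[M ⊕ N, M □ N]`. -/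
theorem minor_pair_eq_interval
    (M N : Matroid α) (hM : M.E.Finite) (hN : N.E.Finite) (h : Disjoint M.E N.E)
    (F : Matroid α) (hF : IsFreeProduct M N F)
    (L : Matroid α) (hLE : L.E = M.E ∪ N.E) :
    (L ↾ M.E = M ∧ L.con M.E = N) ↔ (weakLE (M.disjointSum N h) L ∧ weakLE L F) :=
  minor_pair_eq_interval_general M N h F hF L hLE
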